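/- arXiv:2305.19646 — 4 statements merged into one kernel-verified Lean document; each statement's English description precedes it below -/
import Mathlib

section
/- Every function $f \colon 2^\omega \to \omega_1$ (where every subset of $2^\omega$ is assumed Lebesgue measurable) is constant on a set of positive Lebesgue measure. More precisely: if $f \colon 2^\omega \to \omega_1$ is a function such that for every countable set $A \subseteq \omega_1$ the preimage $f^{-1}(A)$ is Lebesgue measurable, and additionally the set $\{(x,y) \mid f(x) \le f(y)\}$ is measurable in the product measure, then there exists $\alpha \in \omega_1$ with $\lambda(f^{-1}(\alpha)) > 0$. -/
/-!
If every fibre of `f` were null, then, since initial segments below `ω₁` are countable, each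
section `{a | f a ≤ f y}` of `B = {(x, y) | f x ≤ f y}` would be null and each section
`{a | f x ≤ f a}` conull. Fubini in the two orders would then give `μ B = 0` and
`μ B = μ univ * μ univ`.
-/

open MeasureTheory Set

theorem Ordinal.countable_Iic_of_lt_ord_aleph_one {o : Ordinal.{u}}
    (ho : o < (Cardinal.aleph 1).ord) : (Iic o).Countable := by
  have hIio : (Iio o).Countable := by
    rw [← Cardinal.le_aleph0_iff_set_countable, Cardinal.mk_Iio_ordinal,
      Cardinal.lift_le_aleph0, ← Cardinal.lt_aleph_one_iff]
    exact Cardinal.lt_ord.1 ho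
  rw [← Iio_insert]
  exact hIio.insert o

section
variable {X β : Type*} [MeasurableSpace X] {μ : Measure X} [LinearOrder β] {f : X → β}

theorem measure_preimage_Iic_eq_zero {b : β} (hb : (Iic b).Countable)
    (hnull : ∀ c, μ (f ⁻¹' {c}) = 0) : μ (f ⁻¹' Iic b) = 0 := by
  rw [← biUnion_preimage_singleton]
  exact (measure_biUnion_null_iff hb).2 fun c _ => hnull c

theorem measure_preimage_Ici_eq_measure_univ {b : β} (hb : (Iic b).Countable)
    (hnull : ∀ c, μ (f ⁻¹' {c}) = 0) : μ (f ⁻¹' Ici b) = μ univ := by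
  refine measure_congr (ae_eq_univ.2 ?_)
  rw [← preimage_compl, compl_Ici]
  exact measure_mono_null (preimage_mono Iio_subset_Iic_self)
    (measure_preimage_Iic_eq_zero hb hnull)

theorem exists_measure_preimage_singleton_pos_of_countable_Iic [SFinite μ] [NeZero μ]
    (hcount : ∀ x, (Iic (f x)).Countable)
    (hB : MeasurableSet {p : X × X | f p.1 ≤ f p.2}) :
    ∃ b, 0 < μ (f ⁻¹' {b}) := by
  by_contra! h
  replace h : ∀ b, μ (f ⁻¹' {b}) = 0 := fun b => nonpos_iff_eq_zero.1 (h b)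
  have h_lower : μ.prod μ {p : X × X | f p.1 ≤ f p.2} = 0 := by
    have hsection (y : X) : μ {a | f a ≤ f y} = 0 := measure_preimage_Iic_eq_zero (hcount y) h
    rw [Measure.prod_apply_symm hB]
    exact (lintegral_congr hsection).trans lintegral_zero
  have h_upper : μ.prod μ {p : X × X | f p.1 ≤ f p.2} = μ univ * μ univ := by
    have hsection (x : X) : μ {a | f x ≤ f a} = μ univ :=
      measure_preimage_Ici_eq_measure_univ (hcount x) h
    rw [Measure.prod_apply hB]
    exact (lintegral_congr hsection).trans (lintegral_const _)
  exact mul_ne_zero (NeZero.ne _) (NeZero.ne _) (h_upper.symm.trans h_lower)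
end

theorem stmt5_general (μ : Measure (ℕ → Bool)) [IsProbabilityMeasure μ]
    (f : (ℕ → Bool) → Ordinal.{0})
    (hf : ∀ x, f x < (Cardinal.aleph 1).ord)
    (hB : MeasurableSet {p : (ℕ → Bool) × (ℕ → Bool) | f p.1 ≤ f p.2}) :
    ∃ α < (Cardinal.aleph 1).ord, 0 < μ (f ⁻¹' {α}) := by
  obtain ⟨α, hα⟩ := exists_measure_preimage_singleton_pos_of_countable_Iic (μ := μ)
    (fun x => Ordinal.countable_Iic_of_lt_ord_aleph_one (hf x)) hB
  obtain ⟨x, rfl⟩ := nonempty_of_measure_ne_zero hα.ne'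
  exact ⟨f x, hf x, hα⟩

/-- Every function from Cantor space to `ω₁` (with the stated
measurability assumptions) is constant on a set of positive Lebesgue
(coin-flipping) measure. -/
theorem stmt5 (μ : Measure (ℕ → Bool)) [IsProbabilityMeasure μ]
    (hμ : ∀ σ : List Bool,
      μ {x : ℕ → Bool | ∀ i : Fin σ.length, x i = σ.get i}
        = (1 / 2 : ENNReal) ^ σ.length)
    (f : (ℕ → Bool) → Ordinal.{0})
    (hf : ∀ x, f x < (Cardinal.aleph 1).ord)
    (hmeas : ∀ A : Set Ordinal.{0}, A.Countable → MeasurableSet (f ⁻¹' A))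
    (hB : MeasurableSet {p : (ℕ → Bool) × (ℕ → Bool) | f p.1 ≤ f p.2}) :
    ∃ α < (Cardinal.aleph 1).ord, 0 < μ (f ⁻¹' {α}) :=
  stmt5_general μ f hf hB
end

section
/- For every Borel function $f \colon 2^\omega \to 2^\omega$, either the range of $f$ is countable, or the identity function on $2^\omega$ is continuously reducible to $f$; that is, there exist partial continuous functions $\phi, \psi$ on $2^\omega$ such that for all $x \in 2^\omega$, $\psi(f(\phi(x))) = x$. -/
/-!
Refine the topology of the domain to a Polish topology in which `f` is continuous. An uncountable
subset of Cantor space is split by some coordinate into two uncountable halves, so a closed set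
with uncountable image contains two closed sets of arbitrarily small diameter whose images are
uncountable and disjoint. Iterating this gives a Cantor scheme with vanishing diameters whose
induced map `g` is continuous and makes `f ∘ g` injective. As Cantor space is compact, `f ∘ g`
is an embedding, and its inverse on the range is the required `ψ`.
-/

open Set Function Topology PiNat Metric
open scoped ENNReal

theorem Set.exists_forall_not_countable_inter_eval_eq {ι : Type*} [Countable ι]
    {S : Set (ι → Bool)} (hS : ¬S.Countable) :
    ∃ i, ∀ b, ¬(S ∩ {y | y i = b}).Countable := by
  by_contra! h
  choose c hc using h
  -- `S` is covered by the countable sides `{y | y i = c i}` and the one point avoiding them all.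
  refine hS ((countable_singleton fun i => !c i).union (countable_iUnion hc) |>.mono ?_)
  intro y hy
  by_cases hyc : y = fun i => !c i
  · exact Or.inl hyc
  · obtain ⟨i, hi⟩ := Function.ne_iff.1 hyc
    exact Or.inr (mem_iUnion.2 ⟨i, hy, by simpa using hi⟩)

theorem IsClosed.exists_subset_ediam_le_not_countable_image {X Y : Type*} [PseudoEMetricSpace X]
    [TopologicalSpace.SeparableSpace X] {f : X → Y} {A : Set X} (hA : IsClosed A)
    (hfA : ¬(f '' A).Countable) {ε : ℝ≥0∞} (hε : 0 < ε) :
    ∃ B ⊆ A, IsClosed B ∧ ediam B ≤ ε ∧ ¬(f '' B).Countable := by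
  obtain ⟨s, hs, hsd⟩ := TopologicalSpace.exists_countable_dense X
  have hcover : A ⊆ ⋃ z ∈ s, A ∩ closedEBall z (ε / 2) := fun x hx => by
    obtain ⟨z, hz, hzx⟩ :=
      hsd.exists_mem_open isOpen_eball ⟨x, mem_eball_self (ENNReal.half_pos hε.ne')⟩
    exact mem_biUnion hz ⟨hx, (mem_eball'.1 hzx).le⟩
  obtain ⟨z, -, hz⟩ : ∃ z ∈ s, ¬(f '' (A ∩ closedEBall z (ε / 2))).Countable := by
    by_contra! h
    refine hfA ((hs.biUnion h).mono ?_)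
    simpa only [image_iUnion₂] using image_mono hcover
  refine ⟨_, inter_subset_left, hA.inter isClosed_closedEBall, ?_, hz⟩
  calc ediam (A ∩ closedEBall z (ε / 2)) ≤ ediam (closedEBall z (ε / 2)) :=
        ediam_mono inter_subset_right
    _ ≤ 2 * (ε / 2) := ediam_closedEBall_le
    _ = ε := ENNReal.mul_div_cancel two_ne_zero ENNReal.ofNat_ne_top

theorem IsClosed.exists_split_of_not_countable_image {X ι : Type*} [PseudoEMetricSpace X]
    [TopologicalSpace.SeparableSpace X] [Countable ι] {f : X → ι → Bool} (hf : Continuous f)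
    {A : Set X} (hA : IsClosed A) (hfA : ¬(f '' A).Countable) {ε : ℝ≥0∞} (hε : 0 < ε) :
    ∃ B : Bool → Set X, (∀ b, B b ⊆ A ∧ (IsClosed (B b) ∧ ¬(f '' B b).Countable) ∧
      ediam (B b) ≤ ε) ∧ Disjoint (f '' B false) (f '' B true) := by
  obtain ⟨i, hi⟩ := exists_forall_not_countable_inter_eval_eq hfA
  have hhalf (b : Bool) : IsClosed (A ∩ f ⁻¹' {y | y i = b}) :=
    hA.inter (isClosed_eq ((continuous_apply i).comp hf) continuous_const)
  choose B hBA hB hdiam hBf using fun b =>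
    (hhalf b).exists_subset_ediam_le_not_countable_image
      (by rw [image_inter_preimage]; exact hi b) hε
  have himage (b : Bool) : f '' B b ⊆ {y | y i = b} :=
    image_subset_iff.2 ((hBA b).trans inter_subset_right)
  refine ⟨B, fun b => ⟨(hBA b).trans inter_subset_left, ⟨hB b, hBf b⟩, hdiam b⟩, ?_⟩
  refine Set.disjoint_left.2 fun y h₀ h₁ => Bool.false_ne_true ?_
  exact (himage false h₀).symm.trans (himage true h₁)

namespace CantorScheme

variable {β α : Type*}

theorem Disjoint.injective_of_forall_mem {A : List β → Set α} (hA : CantorScheme.Disjoint A)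
    {p : (ℕ → β) → α} (hp : ∀ x n, p x ∈ A (res x n)) : Injective p := by
  intro x y hxy
  apply res_injective
  ext n : 1
  induction n with
  | zero => rfl
  | succ n ih =>
    rw [res_succ, res_succ, ← ih]
    congr 1
    by_contra hne
    have hx := hp x (n + 1)
    have hy := hp y (n + 1)
    rw [res_succ] at hx
    rw [res_succ, ← ih, ← hxy] at hy
    exact Set.disjoint_left.1 (hA _ hne) hx hy

theorem exists_continuous_forall_mem [TopologicalSpace β] [DiscreteTopology β]
    [PseudoMetricSpace α] [CompleteSpace α] {A : List β → Set α} (hclosed : ∀ l, IsClosed (A l))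
    (hne : ∀ l, (A l).Nonempty) (hanti : CantorScheme.Antitone A) (hdiam : VanishingDiam A) :
    ∃ g : (ℕ → β) → α, Continuous g ∧ ∀ x n, g x ∈ A (res x n) := by
  have hdom := (hanti.closureAntitone hclosed).map_of_vanishingDiam hdiam hne
  exact ⟨fun x => (inducedMap A).2 ⟨x, hdom ▸ mem_univ x⟩,
    hdiam.map_continuous.comp (by fun_prop), fun x n => map_mem _ n⟩

theorem exists_of_forall_split [PseudoMetricSpace α] (P : Set α → Prop)
    (R : Set α → Set α → Prop)
    (split : ∀ C, P C → ∀ ε : ℝ≥0∞, 0 < ε →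
      ∃ B : Bool → Set α, (∀ b, B b ⊆ C ∧ P (B b) ∧ ediam (B b) ≤ ε) ∧ R (B false) (B true))
    {C : Set α} (hC : P C) :
    ∃ A : List Bool → Set α, (∀ l, P (A l)) ∧ CantorScheme.Antitone A ∧ VanishingDiam A ∧
      ∀ l, R (A (false :: l)) (A (true :: l)) := by
  choose! B hB hR using split
  have hε (n : ℕ) : 0 < (n : ℝ≥0∞)⁻¹ := ENNReal.inv_pos.2 (ENNReal.natCast_ne_top n)
  let A : List Bool → Set α := fun l =>
    l.rec (motive := fun _ => Set α) C fun b l s => B s (l.length : ℝ≥0∞)⁻¹ b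
  have hA (l : List Bool) : P (A l) := by
    induction l with
    | nil => exact hC
    | cons b l ih => exact (hB _ ih _ (hε _) b).2.1
  refine ⟨A, hA, fun l b => (hB _ (hA l) _ (hε _) b).1, fun x => ?_,
    fun l => hR _ (hA l) _ (hε _)⟩
  have hbound (n : ℕ) : ediam (A (res x (n + 1))) ≤ (n : ℝ≥0∞)⁻¹ := by
    calc ediam (A (res x (n + 1)))
        = ediam (B (A (res x n)) ((res x n).length : ℝ≥0∞)⁻¹ (x n)) := rfl
      _ ≤ ((res x n).length : ℝ≥0∞)⁻¹ := (hB _ (hA (res x n)) _ (hε _) (x n)).2.2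
      _ = (n : ℝ≥0∞)⁻¹ := by rw [res_length]
  refine (Filter.tendsto_add_atTop_iff_nat 1).1 ?_
  exact tendsto_of_tendsto_of_tendsto_of_le_of_le tendsto_const_nhds
    ENNReal.tendsto_inv_nat_nhds_zero (fun _ => bot_le) hbound

end CantorScheme

theorem Continuous.exists_continuous_injective_comp {X ι : Type*} [TopologicalSpace X]
    [PolishSpace X] [Countable ι] {f : X → ι → Bool} (hf : Continuous f)
    (hrange : ¬(range f).Countable) : ∃ g : (ℕ → Bool) → X, Continuous g ∧ Injective (f ∘ g) := by
  let := TopologicalSpace.upgradeIsCompletelyMetrizable X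
  obtain ⟨A, hA, hanti, hdiam, hdisj⟩ := CantorScheme.exists_of_forall_split
    (fun C => IsClosed C ∧ ¬(f '' C).Countable) (fun C₀ C₁ => Disjoint (f '' C₀) (f '' C₁))
    (fun C hC _ hε => hC.1.exists_split_of_not_countable_image hf hC.2 hε)
    (C := univ) ⟨isClosed_univ, by rwa [image_univ]⟩
  have hne (l : List Bool) : (A l).Nonempty :=
    Nonempty.of_image (nonempty_iff_ne_empty.2 fun h => (hA l).2 (h ▸ countable_empty))
  obtain ⟨g, hg, hgA⟩ :=
    CantorScheme.exists_continuous_forall_mem (fun l => (hA l).1) hne hanti hdiam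
  have hdisj' : CantorScheme.Disjoint fun l => f '' A l := by
    rintro l (_ | _) (_ | _) hab
    exacts [absurd rfl hab, hdisj l, (hdisj l).symm, absurd rfl hab]
  exact ⟨g, hg, hdisj'.injective_of_forall_mem fun x n => mem_image_of_mem f (hgA x n)⟩

theorem Measurable.exists_continuous_injective_comp {X ι : Type*} [TopologicalSpace X]
    [PolishSpace X] [MeasurableSpace X] [BorelSpace X] [Countable ι] {f : X → ι → Bool}
    (hf : Measurable f) (hrange : ¬(range f).Countable) :
    ∃ g : (ℕ → Bool) → X, Continuous g ∧ Continuous (f ∘ g) ∧ Injective (f ∘ g) := by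
  obtain ⟨t', ht', hft', ht'polish⟩ := hf.exists_continuous
  obtain ⟨g, hg, hinj⟩ :=
    @Continuous.exists_continuous_injective_comp X ι t' ht'polish _ f hft' hrange
  have hfg : Continuous (f ∘ g) := @Continuous.comp _ _ _ _ t' _ _ _ hft' hg
  exact ⟨g, continuous_le_rng ht' hg, hfg, hinj⟩

theorem Topology.IsInducing.continuousOn_invFun {X Y : Type*} [TopologicalSpace X]
    [TopologicalSpace Y] [Nonempty X] {h : X → Y} (hh : IsInducing h) :
    ContinuousOn (invFun h) (range h) := by
  rw [continuousOn_iff_continuous_domRestrict, hh.continuous_iff]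
  convert continuous_subtype_val using 1
  ext y
  exact invFun_eq y.2

/-- Baby Solecki dichotomy: every Borel function
`f : 2^ω → 2^ω` either has countable range, or the identity is continuously
reducible to it: there are partial continuous `φ` (total) and `ψ` (defined on a
set `D`) with `ψ (f (φ x)) = x` for all `x`. -/
theorem stmt8 (f : (ℕ → Bool) → ℕ → Bool) (hf : Measurable f) :
    (Set.range f).Countable ∨
    ∃ (φ ψ : (ℕ → Bool) → ℕ → Bool) (D : Set (ℕ → Bool)),
      Continuous φ ∧ ContinuousOn ψ D ∧
      ∀ x : ℕ → Bool, f (φ x) ∈ D ∧ ψ (f (φ x)) = x := by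
  refine or_iff_not_imp_left.2 fun hrange => ?_
  have : PolishSpace (ℕ → Bool) := .mk
  obtain ⟨g, hg, hfg, hinj⟩ := hf.exists_continuous_injective_comp hrange
  exact ⟨g, invFun (f ∘ g), range (f ∘ g), hg,
    (hfg.isClosedEmbedding hinj).isInducing.continuousOn_invFun,
    fun x => ⟨mem_range_self x, leftInverse_invFun hinj x⟩⟩
end

section
/- If $f \colon 2^\omega \to 2^\omega$ is a Borel function whose range is uncountable, then there exists a nonempty perfect set $P \subseteq 2^\omega$ such that the restriction $f \upharpoonright P$ is continuous and injective. -/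
/-!
Refine the topology of Cantor space to a finer Polish topology in which `f` is continuous. In a
Polish space `X`, a continuous `π` with uncountable range takes all but countably many of its
values at points every neighbourhood of which has uncountable image; so an open set with
uncountable image contains two small open sets, with closures inside it, whose images are
uncountable and disjoint. Iterating gives a Cantor scheme whose induced map `e : 2^ω → X` is
continuous with `π ∘ e` injective. Its range is compact in the original topology, hence perfect,
and `f` is continuous on it because `e` is a homeomorphism onto it.
-/

open Set Function Filter Topology Metric PiNat
open scoped ENNReal

theorem exists_isOpen_mem_closure_subset_ediam_le {X : Type*} [PseudoEMetricSpace X] {x : X}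
    {W : Set X} (hW : W ∈ 𝓝 x) {ε : ℝ≥0∞} (hε : 0 < ε) :
    ∃ V, IsOpen V ∧ x ∈ V ∧ closure V ⊆ W ∧ ediam V ≤ ε := by
  obtain ⟨r, hr, hrW⟩ := nhds_basis_closedEBall.mem_iff.1 hW
  have hs : 0 < min r (ε / 2) := lt_min hr (ENNReal.half_pos hε.ne')
  refine ⟨eball x (min r (ε / 2)), isOpen_eball, mem_eball_self hs, ?_, ?_⟩
  · exact (closure_minimal eball_subset_closedEBall isClosed_closedEBall).trans
      ((closedEBall_subset_closedEBall (min_le_left _ _)).trans hrW)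
  · calc ediam (eball x (min r (ε / 2))) ≤ 2 * min r (ε / 2) := ediam_eball_le
      _ ≤ 2 * (ε / 2) := by gcongr; exact min_le_right _ _
      _ = ε := ENNReal.mul_div_cancel two_ne_zero ENNReal.ofNat_ne_top

theorem countable_image_setOf_exists_nhds_countable_image {X Y : Type*} [TopologicalSpace X]
    [SecondCountableTopology X] (π : X → Y) :
    (π '' {x | ∃ W ∈ 𝓝 x, (π '' W).Countable}).Countable := by
  refine (((TopologicalSpace.countable_countableBasis X).mono
    (sep_subset _ fun B => (π '' B).Countable)).biUnion fun B hB => hB.2).mono ?_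
  rintro _ ⟨x, ⟨W, hW, hWc⟩, rfl⟩
  obtain ⟨B, hB, hxB, hBW⟩ := (TopologicalSpace.isBasis_countableBasis X).mem_nhds_iff.1 hW
  exact mem_biUnion ⟨hB, hWc.mono (image_mono hBW)⟩ (mem_image_of_mem π hxB)

instance PiNat.perfectSpace {E : ℕ → Type*} [∀ n, TopologicalSpace (E n)]
    [∀ n, DiscreteTopology (E n)] [∀ n, Nontrivial (E n)] : PerfectSpace (∀ n, E n) := by
  refine ⟨preperfect_iff_nhds.2 fun x _ U hU => ?_⟩
  obtain ⟨_, ⟨y, n, rfl⟩, hxy, hyU⟩ := (isTopologicalBasis_cylinders E).mem_nhds_iff.1 hU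
  obtain ⟨b, hb⟩ := exists_ne (x n)
  rw [mem_cylinder_iff_eq] at hxy
  exact ⟨update x n b, ⟨hyU (hxy ▸ update_mem_cylinder x n b), trivial⟩,
    fun h => hb (by simpa using congrFun h n)⟩

theorem Continuous.perfect_range {Z X : Type*} [TopologicalSpace Z] [CompactSpace Z]
    [PerfectSpace Z] [TopologicalSpace X] [T2Space X] {e : Z → X} (he : Continuous e)
    (hinj : Injective e) : Perfect (range e) := by
  refine ⟨(isCompact_range he).isClosed, ?_⟩
  rintro _ ⟨z, rfl⟩
  simpa using (PerfectSpace.univ_preperfect z trivial).map he.continuousAt hinj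

theorem CantorScheme.injective_comp_inducedMap_of_disjoint_image {β α γ : Type*}
    {A : List β → Set α} (π : α → γ)
    (hA : ∀ l, Pairwise (Disjoint on fun a => π '' A (a :: l))) :
    Injective (π ∘ (inducedMap A).2) := by
  intro x y hxy
  by_contra hne
  have hne' : x.1 ≠ y.1 := fun h => hne (Subtype.ext h)
  set n := firstDiff x.1 y.1
  have hres : res x.1 n = res y.1 n := res_eq_res.2 fun m hm => apply_eq_of_lt_firstDiff hm
  have hx := map_mem x (n + 1)
  have hy := map_mem y (n + 1)
  rw [res_succ] at hx hy
  rw [← hres] at hy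
  exact (hA _ (apply_firstDiff_ne hne')).ne_of_mem (mem_image_of_mem π hx)
    (mem_image_of_mem π hy) hxy

theorem exists_pairwise_disjoint_image_of_not_countable_image {X Y : Type*}
    [PseudoEMetricSpace X] [SecondCountableTopology X] [TopologicalSpace Y] [T2Space Y]
    {π : X → Y} (hπ : Continuous π) {U : Set X} (hU : IsOpen U) (hUπ : ¬(π '' U).Countable)
    {ε : ℝ≥0∞} (hε : 0 < ε) :
    ∃ V : Bool → Set X, (∀ b, IsOpen (V b) ∧ ¬(π '' V b).Countable ∧ closure (V b) ⊆ U ∧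
      ediam (V b) ≤ ε) ∧ Pairwise (Disjoint on fun b => π '' V b) := by
  let N := {x | ∃ W ∈ 𝓝 x, (π '' W).Countable}
  have hUN : ¬(π '' (U \ N)).Countable := fun h => hUπ <|
    ((h.union (countable_image_setOf_exists_nhds_countable_image π)).mono <| by
      rw [← image_union]; exact image_mono (subset_sdiff_union U N))
  have piece : ∀ x ∈ U \ N, ∀ O, IsOpen O → π x ∈ O → ∃ V, (IsOpen V ∧ ¬(π '' V).Countable ∧
      closure V ⊆ U ∧ ediam V ≤ ε) ∧ π '' V ⊆ O := by
    rintro x ⟨hxU, hxN⟩ O hO hxO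
    obtain ⟨V, hV, hxV, hVW, hVε⟩ := exists_isOpen_mem_closure_subset_ediam_le
      ((hU.inter (hO.preimage hπ)).mem_nhds ⟨hxU, hxO⟩) hε
    refine ⟨V, ⟨hV, fun hc => hxN ⟨V, hV.mem_nhds hxV, hc⟩, hVW.trans inter_subset_left, hVε⟩, ?_⟩
    exact image_subset_iff.2 ((subset_closure.trans hVW).trans inter_subset_right)
  obtain ⟨_, ⟨x₀, hx₀, rfl⟩, _, ⟨x₁, hx₁, rfl⟩, hne⟩ :=
    not_subsingleton_iff.1 fun h => hUN h.countable
  obtain ⟨O₀, O₁, hO₀, hO₁, hxO₀, hxO₁, hO⟩ := t2_separation hne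
  obtain ⟨V₀, hV₀, hV₀O⟩ := piece x₀ hx₀ O₀ hO₀ hxO₀
  obtain ⟨V₁, hV₁, hV₁O⟩ := piece x₁ hx₁ O₁ hO₁ hxO₁
  refine ⟨fun b => bif b then V₁ else V₀, Bool.forall_bool.2 ⟨hV₀, hV₁⟩, ?_⟩
  simp only [Bool.apply_cond (image π), pairwise_disjoint_on_bool]
  exact hO.symm.mono hV₁O hV₀O

theorem Continuous.exists_continuous_injective_comp_of_not_countable_range {X Y : Type*}
    [TopologicalSpace X] [PolishSpace X] [TopologicalSpace Y] [T2Space Y] {π : X → Y}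
    (hπ : Continuous π) (h : ¬(range π).Countable) :
    ∃ e : (ℕ → Bool) → X, Continuous e ∧ Injective (π ∘ e) := by
  let := TopologicalSpace.upgradeIsCompletelyMetrizable X
  let Large := {U : Set X // IsOpen U ∧ ¬(π '' U).Countable}
  choose V hV hVdisj using fun (U : Large) (n : ℕ) =>
    exists_pairwise_disjoint_image_of_not_countable_image hπ U.2.1 U.2.2
      (ENNReal.inv_pos.2 (ENNReal.natCast_ne_top n))
  let A : List Bool → Large := fun l => l.rec ⟨univ, isOpen_univ, by rwa [image_univ]⟩
    fun b l U => ⟨V U l.length b, (hV U l.length b).1, (hV U l.length b).2.1⟩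
  have hanti : CantorScheme.ClosureAntitone fun l => (A l).1 := fun l b =>
    (hV (A l) l.length b).2.2.1
  have hdiam : CantorScheme.VanishingDiam fun l => (A l).1 := by
    intro x
    rw [← tendsto_add_atTop_iff_nat 1]
    refine tendsto_of_tendsto_of_tendsto_of_le_of_le tendsto_const_nhds
      ENNReal.tendsto_inv_nat_nhds_zero (fun _ => zero_le) fun n => ?_
    exact (hV (A (res x n)) (res x n).length (x n)).2.2.2.trans_eq (by rw [res_length])
  have hnonempty : ∀ l, (A l).1.Nonempty := fun l =>
    nonempty_iff_ne_empty.2 fun he => (A l).2.2 (by simp [he])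
  have hdom := hanti.map_of_vanishingDiam hdiam hnonempty
  have hinj := CantorScheme.injective_comp_inducedMap_of_disjoint_image
    (A := fun l => (A l).1) π fun l => hVdisj (A l) l.length
  exact ⟨fun x => (CantorScheme.inducedMap fun l => (A l).1).2 ⟨x, hdom ▸ trivial⟩,
    hdiam.map_continuous.comp (by fun_prop), fun x y hxy => congrArg Subtype.val (hinj hxy)⟩

theorem Measurable.exists_continuous_injective_comp_of_not_countable_range {X Y : Type*}
    [TopologicalSpace X] [PolishSpace X] [MeasurableSpace X] [BorelSpace X] [TopologicalSpace Y]
    [T2Space Y] [SecondCountableTopology Y] [MeasurableSpace Y] [OpensMeasurableSpace Y]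
    {f : X → Y} (hf : Measurable f) (h : ¬(range f).Countable) :
    ∃ e : (ℕ → Bool) → X, Continuous e ∧ Continuous (f ∘ e) ∧ Injective (f ∘ e) := by
  obtain ⟨t', ht', hft', ht'Polish⟩ := hf.exists_continuous
  obtain ⟨e, he, hinj⟩ := @Continuous.exists_continuous_injective_comp_of_not_countable_range
    X Y t' ht'Polish _ _ f hft' h
  exact ⟨e, continuous_le_rng ht' he, hft'.comp he, hinj⟩

/-- If a Borel function on Cantor space has uncountable range,
then there is a nonempty perfect set on which it is continuous and injective. -/
theorem stmt9 (f : (ℕ → Bool) → ℕ → Bool) (hf : Measurable f)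
    (h : ¬ (Set.range f).Countable) :
    ∃ P : Set (ℕ → Bool), Perfect P ∧ P.Nonempty ∧
      ContinuousOn f P ∧ Set.InjOn f P := by
  -- not found by instance synthesis
  have : PolishSpace (ℕ → Bool) := {}
  obtain ⟨e, he, hfe, hinj⟩ := hf.exists_continuous_injective_comp_of_not_countable_range h
  refine ⟨range e, he.perfect_range hinj.of_comp, range_nonempty e, ?_, ?_⟩
  · rw [← image_univ, (he.isClosedEmbedding hinj.of_comp).isInducing.continuousOn_image_iff]
    exact hfe.continuousOn
  · rintro _ ⟨x, rfl⟩ _ ⟨y, rfl⟩ hxy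
    exact congrArg e (hinj hxy)
end

section
/- Suppose $A \subseteq 2^\omega$ is countably directed for Turing reducibility (every countable subset of $A$ has an upper bound in $A$ under $\leq_T$) and $A$ contains a perfect set. Assume further the coding theorem: for any perfect set $P$, countable dense subset $B \subseteq P$, and real $c$ computing every element of $B$, and for every $x \in 2^\omega$, there exist $y_0,y_1,y_2,y_3 \in P$ with $c \oplus y_0 \oplus y_1 \oplus y_2 \oplus y_3 \geq_T x$. Then $A$ is cofinal in the Turing degrees. -/
/-- `OracleRecursiveIn g f` : the partial function `f : ℕ →. ℕ` is partial recursive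
relative to the oracle `g : ℕ →. ℕ`.  This is the standard inductive definition,
mirroring `Nat.Partrec` with an extra `oracle` constructor. -/
inductive OracleRecursiveIn (g : ℕ →. ℕ) : (ℕ →. ℕ) → Prop
  | oracle : OracleRecursiveIn g g
  | zero : OracleRecursiveIn g (pure 0)
  | succ : OracleRecursiveIn g ↑(Nat.succ)
  | left : OracleRecursiveIn g ↑fun n : ℕ => n.unpair.1
  | right : OracleRecursiveIn g ↑fun n : ℕ => n.unpair.2
  | pair {f h} : OracleRecursiveIn g f → OracleRecursiveIn g h →
      OracleRecursiveIn g fun n => Nat.pair <$> f n <*> h n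
  | comp {f h} : OracleRecursiveIn g f → OracleRecursiveIn g h →
      OracleRecursiveIn g fun n => h n >>= f
  | prec {f h} : OracleRecursiveIn g f → OracleRecursiveIn g h →
      OracleRecursiveIn g (Nat.unpaired fun a n =>
        n.rec (f a) fun y IH => do let i ← IH; h (Nat.pair a (Nat.pair y i)))
  | rfind {f} : OracleRecursiveIn g f →
      OracleRecursiveIn g fun a => Nat.rfind fun n => (fun m => m = 0) <$> f (Nat.pair a n)

/-- View an element of Cantor space as an oracle `ℕ →. ℕ`. -/
def oracleOf (x : ℕ → Bool) : ℕ →. ℕ := fun n => Part.some (cond (x n) 1 0)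

/-- Turing reducibility on Cantor space. -/
def TuringLe (x y : ℕ → Bool) : Prop := OracleRecursiveIn (oracleOf y) (oracleOf x)

/-- Turing equivalence on Cantor space. -/
def TuringEquiv (x y : ℕ → Bool) : Prop := TuringLe x y ∧ TuringLe y x

/-- A real is computable if it is reducible to the trivial oracle. -/
def ComputableReal (x : ℕ → Bool) : Prop := TuringLe x fun _ => false

/-- Turing join of two reals. -/
def tJoin (x y : ℕ → Bool) : ℕ → Bool :=
  fun n => if n % 2 = 0 then x (n / 2) else y (n / 2)

infixl:70 " ⊕ₜ " => tJoin

/-- The initial segment of length `n` of `x : ℕ → Bool`, as a finite binary string. -/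
def initSeg (x : ℕ → Bool) (n : ℕ) : List Bool := List.ofFn fun i : Fin n => x i

/-- A tree on `2^{<ω}` : a set of finite binary strings closed under prefixes. -/
def IsTree (T : Set (List Bool)) : Prop :=
  ∀ σ ∈ T, ∀ τ : List Bool, τ <+: σ → τ ∈ T

/-- A perfect tree: a nonempty tree in which every node has two incomparable extensions. -/
def IsPerfectTree (T : Set (List Bool)) : Prop :=
  IsTree T ∧ T.Nonempty ∧ ∀ σ ∈ T, ∃ τ₁ ∈ T, ∃ τ₂ ∈ T,
    σ <+: τ₁ ∧ σ <+: τ₂ ∧ ¬τ₁ <+: τ₂ ∧ ¬τ₂ <+: τ₁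

/-- The set of infinite paths through a tree. -/
def pathsThrough (T : Set (List Bool)) : Set (ℕ → Bool) :=
  { x | ∀ n, initSeg x n ∈ T }

open Classical in
/-- A coding of a tree `T ⊆ 2^{<ω}` as an element of Cantor space. -/
noncomputable def treeReal (T : Set (List Bool)) : ℕ → Bool :=
  fun n => if ∃ σ ∈ T, Encodable.encode σ = n then true else false

/-- A pointed perfect tree: a perfect tree each of whose paths computes the tree. -/
def IsPointedPerfectTree (T : Set (List Bool)) : Prop :=
  IsPerfectTree T ∧ ∀ x ∈ pathsThrough T, TuringLe (treeReal T) x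

/-- `ComputesOn φ F D` : the partial recursive function `φ` is (the string-level
part of) a Turing functional which is total on every oracle in `D` and computes
`F` there: for every `x ∈ D` and input `n`, some initial segment of `x` makes `φ`
converge to the value `F x n`, and every converging initial segment of `x` yields
that same value. -/
def ComputesOn (φ : ℕ →. ℕ) (F : (ℕ → Bool) → ℕ → Bool) (D : Set (ℕ → Bool)) : Prop :=
  Nat.Partrec φ ∧
  (∀ x ∈ D, ∀ n : ℕ, ∃ k : ℕ,
      φ (Nat.pair (Encodable.encode (initSeg x k)) n) = Part.some (cond (F x n) 1 0)) ∧
  (∀ x ∈ D, ∀ n k m : ℕ,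
      φ (Nat.pair (Encodable.encode (initSeg x k)) n) = Part.some m → m = cond (F x n) 1 0)

/-!
Let `P ⊆ A` be perfect, `B ⊆ P` countable and dense, and `c ∈ A` an upper bound of `B`. The coding
theorem gives `y₀, …, y₃ ∈ P` with `a ≤_T c ⊕ y₀ ⊕ y₁ ⊕ y₂ ⊕ y₃`, and any upper bound in `A` of the
five reals `c, y₀, …, y₃` computes this join, hence computes `a`.
-/

theorem OracleRecursiveIn.of_partrec {g f : ℕ →. ℕ} (hf : Nat.Partrec f) :
    OracleRecursiveIn g f := by
  induction hf with
  | zero => exact .zero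
  | succ => exact .succ
  | left => exact .left
  | right => exact .right
  | pair _ _ ih₁ ih₂ => exact .pair ih₁ ih₂
  | comp _ _ ih₁ ih₂ => exact .comp ih₁ ih₂
  | prec _ _ ih₁ ih₂ => exact .prec ih₁ ih₂
  | rfind _ ih => exact .rfind ih

theorem OracleRecursiveIn.trans {f g h : ℕ →. ℕ} (hf : OracleRecursiveIn g f)
    (hg : OracleRecursiveIn h g) : OracleRecursiveIn h f := by
  induction hf with
  | oracle => exact hg
  | zero => exact .zero
  | succ => exact .succ
  | left => exact .left
  | right => exact .right
  | pair _ _ ih₁ ih₂ => exact .pair ih₁ ih₂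
  | comp _ _ ih₁ ih₂ => exact .comp ih₁ ih₂
  | prec _ _ ih₁ ih₂ => exact .prec ih₁ ih₂
  | rfind _ ih => exact .rfind ih

theorem TuringLe.trans {x y z : ℕ → Bool} (hxy : TuringLe x y) (hyz : TuringLe y z) :
    TuringLe x z :=
  OracleRecursiveIn.trans hxy hyz

theorem tJoin_turingLe {u v w : ℕ → Bool} (hu : TuringLe u w) (hv : TuringLe v w) :
    TuringLe (u ⊕ₜ v) w := by
  unfold TuringLe at *
  -- `(u ⊕ₜ v) n` is a primitive recursion on the parity bit of `n`, with parameter `n / 2`: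
  -- the base case reads `u`, the successor case reads `v`.
  have hsplit : OracleRecursiveIn (oracleOf w) ↑(fun n : ℕ => Nat.pair (n / 2) (n % 2)) :=
    .of_partrec (Partrec.nat_iff.1 (Computable.partrec
      ((Primrec₂.natPair.comp (Primrec.nat_div.comp Primrec.id (Primrec.const 2))
        (Primrec.nat_mod.comp Primrec.id (Primrec.const 2))).to_comp)))
  have hstep : OracleRecursiveIn (oracleOf w)
      (fun n => (↑(fun n : ℕ => n.unpair.1) : ℕ →. ℕ) n >>= oracleOf v) := .comp hv .left
  have hjoin : oracleOf (u ⊕ₜ v) = fun n =>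
      (↑(fun n : ℕ => Nat.pair (n / 2) (n % 2)) : ℕ →. ℕ) n >>=
        Nat.unpaired (fun a n =>
          n.rec (oracleOf u a) fun y IH => do
            let i ← IH
            (↑(fun n : ℕ => n.unpair.1) : ℕ →. ℕ) (Nat.pair a (Nat.pair y i)) >>= oracleOf v) := by
    funext n
    rcases Nat.mod_two_eq_zero_or_one n with h | h
    · simp [oracleOf, tJoin, h, Nat.unpaired, Nat.unpair_pair]
    · simp only [oracleOf, tJoin, h, one_ne_zero, ↓reduceIte, PFun.coe_val, Nat.unpair_pair,
        Part.bind_eq_bind, Part.bind_some, Nat.unpaired, Nat.rec_one]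
      exact (Part.bind_some _ _).symm
  rw [hjoin]
  exact .comp (.prec hu hstep) hsplit

/-- If `A ⊆ 2^ω` is countably directed for Turing reducibility
and contains a (nonempty) perfect set, then—assuming the coding theorem—`A` is
cofinal in the Turing degrees. -/
theorem stmt14 (A : Set (ℕ → Bool))
    (hdir : ∀ B ⊆ A, B.Countable → ∃ x ∈ A, ∀ y ∈ B, TuringLe y x)
    (hperf : ∃ P ⊆ A, Perfect P ∧ P.Nonempty)
    (hcode : ∀ P : Set (ℕ → Bool), Perfect P → P.Nonempty →
      ∀ B ⊆ P, B.Countable → P ⊆ closure B →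
      ∀ c : ℕ → Bool, (∀ b ∈ B, TuringLe b c) →
      ∀ x : ℕ → Bool, ∃ y₀ ∈ P, ∃ y₁ ∈ P, ∃ y₂ ∈ P, ∃ y₃ ∈ P,
        TuringLe x (c ⊕ₜ y₀ ⊕ₜ y₁ ⊕ₜ y₂ ⊕ₜ y₃)) :
    ∀ a : ℕ → Bool, ∃ x ∈ A, TuringLe a x := by
  intro a
  obtain ⟨P, hPA, hP, hPne⟩ := hperf
  obtain ⟨B, hBP, hBc, hBdense⟩ :=
    (TopologicalSpace.IsSeparable.of_separableSpace P).exists_countable_dense_subset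
  obtain ⟨c, hcA, hcB⟩ := hdir B (hBP.trans hPA) hBc
  obtain ⟨y₀, hy₀, y₁, hy₁, y₂, hy₂, y₃, hy₃, ha⟩ := hcode P hP hPne B hBP hBc hBdense c hcB a
  have hfive : ({c, y₀, y₁, y₂, y₃} : Set (ℕ → Bool)) ⊆ A := by
    simp [Set.insert_subset_iff, hcA, hPA hy₀, hPA hy₁, hPA hy₂, hPA hy₃]
  obtain ⟨x, hxA, hx⟩ := hdir _ hfive (Set.toFinite _).countable
  simp only [Set.mem_insert_iff, Set.mem_singleton_iff, forall_eq_or_imp, forall_eq] at hx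
  obtain ⟨hc, h₀, h₁, h₂, h₃⟩ := hx
  exact ⟨x, hxA, ha.trans <|
    tJoin_turingLe (tJoin_turingLe (tJoin_turingLe (tJoin_turingLe hc h₀) h₁) h₂) h₃⟩
end
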